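/- There exist c > 0 and θ₀ ∈ (0, 1) such that for every θ ∈ (0, θ₀], ρ(B(A', θ/4) ∩ {x ∈ ℝ^d : x₂ > 0}) ≥ c/|log(θ/4)|, where B(A', θ/4) denotes the open Euclidean ball of center A' and radius θ/4. -/

import Mathlib

open MeasureTheory Metric Pointwise

namespace Stmt4Aux

variable {d : ℕ}

/-- Cone–shell set near the origin. -/
def sh (i0 i1 : Fin d) (a b : ℝ) : Set (EuclideanSpace ℝ (Fin d)) :=
  {y | ‖y‖ < 2 * y i0 ∧ 0 < y i1 ∧ a ≤ ‖y‖ ∧ ‖y‖ < b}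

lemma cont_coord (i : Fin d) : Continuous (fun y : EuclideanSpace ℝ (Fin d) => y i) :=
  (EuclideanSpace.proj i).continuous

lemma measurableSet_sh (i0 i1 : Fin d) (a b : ℝ) : MeasurableSet (sh i0 i1 a b) := by
  have h1 : MeasurableSet {y : EuclideanSpace ℝ (Fin d) | ‖y‖ < 2 * y i0} :=
    (isOpen_lt continuous_norm ((cont_coord i0).const_smul (2:ℝ))).measurableSet
  have h2 : MeasurableSet {y : EuclideanSpace ℝ (Fin d) | 0 < y i1} :=
    (isOpen_lt continuous_const (cont_coord i1)).measurableSet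
  have h3 : MeasurableSet {y : EuclideanSpace ℝ (Fin d) | a ≤ ‖y‖} :=
    (isClosed_le continuous_const continuous_norm).measurableSet
  have h4 : MeasurableSet {y : EuclideanSpace ℝ (Fin d) | ‖y‖ < b} :=
    (isOpen_lt continuous_norm continuous_const).measurableSet
  have heq : sh i0 i1 a b = {y : EuclideanSpace ℝ (Fin d) | ‖y‖ < 2 * y i0} ∩
      ({y | 0 < y i1} ∩ ({y | a ≤ ‖y‖} ∩ {y | ‖y‖ < b})) := by
    ext y; simp [sh, Set.mem_setOf_eq, and_assoc]
  rw [heq]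
  exact h1.inter (h2.inter (h3.inter h4))

lemma smul_sh {r : ℝ} (hr : 0 < r) (i0 i1 : Fin d) (a b : ℝ) :
    r • sh i0 i1 a b = sh i0 i1 (r * a) (r * b) := by
  ext x
  rw [Set.mem_smul_set_iff_inv_smul_mem₀ hr.ne']
  have hri : (0:ℝ) < r⁻¹ := inv_pos.2 hr
  have hnorm : ‖r⁻¹ • x‖ = r⁻¹ * ‖x‖ := by
    rw [norm_smul, Real.norm_eq_abs, abs_of_pos hri]
  simp only [sh, Set.mem_setOf_eq, hnorm, PiLp.smul_apply, smul_eq_mul]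
  have e1 : (r⁻¹ * ‖x‖ < 2 * (r⁻¹ * x i0)) ↔ ‖x‖ < 2 * x i0 := by
    rw [show (2:ℝ) * (r⁻¹ * x i0) = r⁻¹ * (2 * x i0) by ring]
    exact mul_lt_mul_iff_right₀ hri
  have e2 : (0 < r⁻¹ * x i1) ↔ 0 < x i1 := by
    constructor
    · intro h; nlinarith
    · intro h; positivity
  have e3 : (a ≤ r⁻¹ * ‖x‖) ↔ r * a ≤ ‖x‖ := le_inv_mul_iff₀ hr
  have e4 : (r⁻¹ * ‖x‖ < b) ↔ ‖x‖ < r * b := inv_mul_lt_iff₀ hr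
  exact and_congr e1 (and_congr e2 (and_congr e3 e4))

lemma vol_sh_half {r : ℝ} (hr : 0 < r) (i0 i1 : Fin d) :
    volume (sh i0 i1 (r / 2) r) =
      ENNReal.ofReal (r ^ d) * volume (sh i0 i1 (1/2) 1) := by
  have h := Measure.addHaar_smul (volume : Measure (EuclideanSpace ℝ (Fin d))) r
      (sh i0 i1 (1/2) 1)
  rw [smul_sh hr] at h
  have : r * (1/2) = r / 2 := by ring
  rw [this, mul_one] at h
  rw [h, finrank_euclideanSpace_fin, abs_of_nonneg (by positivity)]

lemma kappa_pos (i0 i1 : Fin d) (h01 : i0 ≠ i1) :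
    0 < volume (sh i0 i1 (1/2) 1) := by
  set U : Set (EuclideanSpace ℝ (Fin d)) :=
    {y | ‖y‖ < 2 * y i0} ∩ ({y | 0 < y i1} ∩ ({y | 1/2 < ‖y‖} ∩ {y | ‖y‖ < 1})) with hU
  have hUopen : IsOpen U := by
    refine ((isOpen_lt continuous_norm ((cont_coord i0).const_smul (2:ℝ)))).inter ?_
    refine (isOpen_lt continuous_const (cont_coord i1)).inter ?_
    exact (isOpen_lt continuous_const continuous_norm).inter
      (isOpen_lt continuous_norm continuous_const)
  have hUsub : U ⊆ sh i0 i1 (1/2) 1 := by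
    rintro y ⟨c1, c2, c3, c4⟩
    exact ⟨c1, c2, le_of_lt c3, c4⟩
  have hUne : U.Nonempty := by
    refine ⟨EuclideanSpace.single i0 (7/10) + EuclideanSpace.single i1 (1/10), ?_, ?_, ?_, ?_⟩
    all_goals
      set y : EuclideanSpace ℝ (Fin d) :=
        EuclideanSpace.single i0 (7/10) + EuclideanSpace.single i1 (1/10) with hy
    · -- ‖y‖ < 2 * y i0
      have hni : ‖y‖ ≤ 8/10 := by
        calc ‖y‖ ≤ ‖EuclideanSpace.single i0 ((7:ℝ)/10)‖ +
            ‖EuclideanSpace.single i1 ((1:ℝ)/10)‖ := norm_add_le _ _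
        _ = 8/10 := by rw [EuclideanSpace.norm_single, EuclideanSpace.norm_single]; norm_num
      have hc : y i0 = 7/10 := by
        simp [hy, PiLp.add_apply, EuclideanSpace.single_apply, h01, h01.symm]
      rw [Set.mem_setOf_eq, hc]; linarith
    · have hc : y i1 = 1/10 := by
        simp [hy, PiLp.add_apply, EuclideanSpace.single_apply, h01, h01.symm]
      rw [Set.mem_setOf_eq, hc]; norm_num
    · -- 1/2 < ‖y‖
      have h7 : (7:ℝ)/10 = ‖EuclideanSpace.single i0 ((7:ℝ)/10)‖ := by
        rw [EuclideanSpace.norm_single]; norm_num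
      have : ‖EuclideanSpace.single i0 ((7:ℝ)/10)‖ ≤ ‖y‖ +
          ‖EuclideanSpace.single i1 ((1:ℝ)/10)‖ := by
        have : EuclideanSpace.single i0 ((7:ℝ)/10) =
            y - EuclideanSpace.single i1 ((1:ℝ)/10) := by rw [hy]; abel
        rw [this]; exact norm_sub_le _ _
      have h1 : ‖EuclideanSpace.single i1 ((1:ℝ)/10)‖ = 1/10 := by
        rw [EuclideanSpace.norm_single]; norm_num
      rw [Set.mem_setOf_eq]
      rw [h1] at this; linarith
    · -- ‖y‖ < 1
      have hni : ‖y‖ ≤ 8/10 := by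
        calc ‖y‖ ≤ ‖EuclideanSpace.single i0 ((7:ℝ)/10)‖ +
            ‖EuclideanSpace.single i1 ((1:ℝ)/10)‖ := norm_add_le _ _
        _ = 8/10 := by rw [EuclideanSpace.norm_single, EuclideanSpace.norm_single]; norm_num
      rw [Set.mem_setOf_eq]; linarith
  exact lt_of_lt_of_le (hUopen.measure_pos volume hUne) (measure_mono hUsub)

lemma kappa_lt_top (i0 i1 : Fin d) : volume (sh i0 i1 (1/2) 1) < ⊤ := by
  refine lt_of_le_of_lt (measure_mono ?_) (measure_ball_lt_top (x := (0:EuclideanSpace ℝ (Fin d))) (r := 1))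
  rintro y ⟨-, -, -, h4⟩
  simpa [mem_ball, dist_eq_norm] using h4

end Stmt4Aux
set_option maxHeartbeats 2000000 in
/-- There exist `c > 0` and `θ₀ ∈ (0,1)` such that for every `θ ∈ (0, θ₀]`,
`ρ(B(A', θ/4) ∩ {x₂ > 0}) ≥ c/|log(θ/4)|`, where `ρ` is the probability measure on the
closed unit ball with density `c₀ · f(dist(x, E)) · 𝟙_{|x| ≤ 1}` w.r.t. Lebesgue,
`f r = r^{-d} min(1, (log r)^{-2})` and `E = {A, A'}`. -/
theorem stmt4 (d : ℕ) (hd : 2 ≤ d)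
    (A A' : EuclideanSpace ℝ (Fin d))
    (hA : A = EuclideanSpace.single (⟨0, by omega⟩ : Fin d) (1 : ℝ))
    (hA' : A' = EuclideanSpace.single (⟨0, by omega⟩ : Fin d) (-1 : ℝ))
    (E : Set (EuclideanSpace ℝ (Fin d))) (hE : E = {A, A'})
    (f : ℝ → ℝ)
    (hf : f = fun r => r ^ (-(d : ℝ)) * min 1 ((Real.log r) ^ 2)⁻¹)
    (c₀ : ℝ) (hc₀ : 0 < c₀)
    (ρ : Measure (EuclideanSpace ℝ (Fin d)))
    (hρ : ρ = volume.withDensity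
      ((closedBall (0 : EuclideanSpace ℝ (Fin d)) 1).indicator
        fun x => ENNReal.ofReal (c₀ * f (infDist x E))))
    (hprob : IsProbabilityMeasure ρ) :
    ∃ c : ℝ, 0 < c ∧ ∃ θ₀ ∈ Set.Ioo (0 : ℝ) 1, ∀ θ ∈ Set.Ioc (0 : ℝ) θ₀,
      ENNReal.ofReal (c / |Real.log (θ / 4)|) ≤
        ρ (ball A' (θ / 4) ∩ {x : EuclideanSpace ℝ (Fin d) | 0 < x ⟨1, by omega⟩}) := by
  classical
  set i0 : Fin d := ⟨0, by omega⟩ with hi0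
  set i1 : Fin d := ⟨1, by omega⟩ with hi1
  have h01 : i0 ≠ i1 := by
    intro h
    have := congrArg Fin.val h
    simp [hi0, hi1] at this
  have h10 : i1 ≠ i0 := h01.symm
  set κ : ENNReal := volume (Stmt4Aux.sh i0 i1 (1/2) 1) with hκ
  have hκpos : 0 < κ := Stmt4Aux.kappa_pos i0 i1 h01
  have hκtop : κ < ⊤ := Stmt4Aux.kappa_lt_top i0 i1
  obtain ⟨κ', hκ'pos, hκoR⟩ : ∃ v : ℝ, 0 < v ∧ ENNReal.ofReal v = κ :=
    ⟨κ.toReal, ENNReal.toReal_pos hκpos.ne' hκtop.ne, ENNReal.ofReal_toReal hκtop.ne⟩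
  clear_value κ
  have hlog2 : 0 < Real.log 2 := Real.log_pos one_lt_two
  refine ⟨c₀ * κ' / (2 * Real.log 2),
    div_pos (mul_pos hc₀ hκ'pos) (mul_pos two_pos hlog2), Real.exp (-1),
    ⟨Real.exp_pos _, ?_⟩, ?_⟩
  · calc Real.exp (-1) < Real.exp 0 := Real.exp_lt_exp.2 (by norm_num)
      _ = 1 := Real.exp_zero
  intro θ hθ
  obtain ⟨hθ0, hθ1⟩ := hθ
  set s : ℝ := θ / 4 with hs
  have hs0 : 0 < s := by rw [hs]; exact div_pos hθ0 (by norm_num)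
  have hlogs : Real.log s ≤ -1 := by
    have h1 : Real.log θ ≤ -1 := by
      have h2 := Real.log_le_log hθ0 hθ1
      rwa [Real.log_exp] at h2
    have h4 : 0 < Real.log 4 := Real.log_pos (by norm_num)
    rw [hs, Real.log_div hθ0.ne' (by norm_num)]
    linarith
  have hs1 : s < 1 := by
    by_contra h
    push_neg at h
    have := Real.log_nonneg h
    linarith
  set b : ℝ := -Real.log s with hb
  have hb1 : 1 ≤ b := by rw [hb]; linarith
  have hblog2 : Real.log 2 ≤ b := by
    have hl21 : Real.log 2 < 1 := by
      have := Real.log_lt_sub_one_of_pos (x := 2) (by norm_num) (by norm_num)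
      linarith
    linarith
  -- radii
  set r : ℕ → ℝ := fun k => s / 2 ^ k with hrdef
  have hrpos : ∀ k, 0 < r k := by
    intro k; rw [hrdef]; exact div_pos hs0 (pow_pos two_pos k)
  have hrsucc : ∀ k, r (k + 1) = r k / 2 := by
    intro k; rw [hrdef]; simp only; rw [pow_succ]; ring
  have hrles : ∀ k, r k ≤ s := by
    intro k; rw [hrdef]; simp only
    apply div_le_self hs0.le
    exact one_le_pow₀ (by norm_num)
  have hrlt1 : ∀ k, r k < 1 := fun k => lt_of_le_of_lt (hrles k) hs1
  set L : ℕ → ℝ := fun k => b + (k + 1) * Real.log 2 with hLdef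
  have hLpos : ∀ k, 0 < L k := by
    intro k; rw [hLdef]; simp only
    have h1 : (0:ℝ) ≤ ((k:ℝ) + 1) * Real.log 2 := by positivity
    linarith
  have hL1 : ∀ k, 1 ≤ L k := by
    intro k; rw [hLdef]; simp only
    have h1 : (0:ℝ) ≤ ((k:ℝ) + 1) * Real.log 2 := by positivity
    linarith
  have hLsucc : ∀ k, L (k + 1) = L k + Real.log 2 := by
    intro k; rw [hLdef]; simp only; push_cast; ring
  have hlogr : ∀ k, Real.log (r (k + 1)) = -(L k) := by
    intro k
    rw [hrdef, hLdef]; simp only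
    rw [Real.log_div hs0.ne' (pow_pos two_pos (k+1)).ne', Real.log_pow, hb]
    push_cast; ring
  -- the shell sets, translated to A'
  set T : ℕ → Set (EuclideanSpace ℝ (Fin d)) :=
    fun k => (fun x => x - A') ⁻¹' (Stmt4Aux.sh i0 i1 (r (k+1)) (r k)) with hT
  have hTmeas : ∀ k, MeasurableSet (T k) := by
    intro k
    exact (Stmt4Aux.measurableSet_sh i0 i1 _ _).preimage
      (measurable_id.sub measurable_const)
  have hTvol : ∀ k, volume (T k) = ENNReal.ofReal ((r k) ^ d) * κ := by
    intro k
    have h1 : (fun x : EuclideanSpace ℝ (Fin d) => x - A') = fun x => x + (-A') := by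
      funext x; rw [sub_eq_add_neg]
    rw [hT]; simp only [h1]
    rw [measure_preimage_add_right]
    rw [hrsucc k, hκ]
    exact Stmt4Aux.vol_sh_half (hrpos k) i0 i1
  have hA'i1 : A' i1 = 0 := by
    rw [hA', EuclideanSpace.single_apply, if_neg h10]
  have hsubT : ∀ k, T k ⊆ ball A' s ∩ {x : EuclideanSpace ℝ (Fin d) | 0 < x i1} := by
    intro k x hx
    have hx' : x - A' ∈ Stmt4Aux.sh i0 i1 (r (k+1)) (r k) := hx
    obtain ⟨c1, c2, c3, c4⟩ := hx'
    constructor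
    · rw [mem_ball, dist_eq_norm]
      exact lt_of_lt_of_le c4 (hrles k)
    · have h2 : (x - A') i1 = x i1 - A' i1 := rfl
      rw [h2, hA'i1, sub_zero] at c2
      exact c2
  have hrmono : ∀ {k j : ℕ}, k < j → r j ≤ r (k + 1) := by
    intro k j hkj
    rw [hrdef]; simp only
    apply div_le_div_of_nonneg_left hs0.le (pow_pos two_pos (k+1))
    exact pow_le_pow_right₀ (by norm_num) hkj
  have hdisj : Pairwise (Function.onFun Disjoint T) := by
    have key : ∀ {k j : ℕ}, k < j → Disjoint (T k) (T j) := by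
      intro k j hkj
      rw [Set.disjoint_left]
      intro x hk hj
      have hk' : x - A' ∈ Stmt4Aux.sh i0 i1 (r (k+1)) (r k) := hk
      have hj' : x - A' ∈ Stmt4Aux.sh i0 i1 (r (j+1)) (r j) := hj
      obtain ⟨-, -, hk3, -⟩ := hk'
      obtain ⟨-, -, -, hj4⟩ := hj'
      have := hrmono hkj
      linarith
    intro k j hkj
    rcases lt_or_gt_of_ne hkj with h | h
    · exact key h
    · exact (key h).symm
  -- main per-shell lower bound
  have hmain : ∀ k, ENNReal.ofReal (c₀ * κ' / (L k) ^ 2) ≤ ρ (T k) := by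
    intro k
    have hwd : ρ (T k) = ∫⁻ x in T k,
        (closedBall (0 : EuclideanSpace ℝ (Fin d)) 1).indicator
          (fun x => ENNReal.ofReal (c₀ * f (infDist x E))) x ∂volume := by
      rw [hρ, withDensity_apply _ (hTmeas k)]
    rw [hwd]
    have hpoint : ∀ x ∈ T k,
        ENNReal.ofReal (c₀ * ((r k) ^ (-(d:ℝ)) * ((L k) ^ 2)⁻¹)) ≤
        (closedBall (0 : EuclideanSpace ℝ (Fin d)) 1).indicator
          (fun x => ENNReal.ofReal (c₀ * f (infDist x E))) x := by
      intro x hx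
      have hx' : x - A' ∈ Stmt4Aux.sh i0 i1 (r (k+1)) (r k) := hx
      obtain ⟨c1, c2, c3, c4⟩ := hx'
      set y : EuclideanSpace ℝ (Fin d) := x - A' with hy
      have hn0 : 0 < ‖y‖ := lt_of_lt_of_le (hrpos (k+1)) c3
      have hnlt1 : ‖y‖ < 1 := lt_trans c4 (hrlt1 k)
      have hxy : x = y + A' := by rw [hy]; abel
      have hxball : x ∈ closedBall (0 : EuclideanSpace ℝ (Fin d)) 1 := by
        rw [mem_closedBall, dist_zero_right]
        have h1 : ‖x‖ ^ 2 = ‖y‖ ^ 2 + 2 * (inner ℝ y A' : ℝ) + ‖A'‖ ^ 2 := by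
          rw [hxy]; exact norm_add_sq_real y A'
        have h2 : (inner ℝ y A' : ℝ) = -(y i0) := by
          rw [real_inner_comm, hA', EuclideanSpace.inner_single_left]
          simp
        have h3 : ‖A'‖ = 1 := by
          rw [hA', EuclideanSpace.norm_single]; norm_num
        rw [h2, h3] at h1
        nlinarith [norm_nonneg x, c1, hn0, hnlt1]
      rw [Set.indicator_of_mem hxball]
      have hdA' : dist x A' = ‖y‖ := by rw [dist_eq_norm, hy]
      have hdAA' : dist A A' = 2 := by
        rw [hA, hA', EuclideanSpace.dist_single_same, Real.dist_eq]
        norm_num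
      have hdA : 2 - ‖y‖ ≤ dist x A := by
        have htri := dist_triangle A x A'
        rw [dist_comm A x, hdA', hdAA'] at htri
        linarith
      have hinf : infDist x E = ‖y‖ := by
        refine le_antisymm ?_ ?_
        · rw [← hdA']
          exact infDist_le_dist_of_mem (by rw [hE]; simp)
        · by_contra hlt
          push_neg at hlt
          have hne : E.Nonempty := by rw [hE]; exact ⟨A, by simp⟩
          obtain ⟨z, hz, hzlt⟩ := (infDist_lt_iff hne).1 hlt
          rw [hE] at hz
          simp only [Set.mem_insert_iff, Set.mem_singleton_iff] at hz
          rcases hz with rfl | rfl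
          · linarith
          · rw [hdA'] at hzlt; linarith
      rw [hinf]
      apply ENNReal.ofReal_le_ofReal
      apply mul_le_mul_of_nonneg_left ?_ hc₀.le
      rw [hf]; simp only
      have p1 : (r k) ^ (-(d:ℝ)) ≤ ‖y‖ ^ (-(d:ℝ)) :=
        Real.rpow_le_rpow_of_nonpos hn0 c4.le
          (neg_nonpos.2 (Nat.cast_nonneg d))
      have hlogy_neg : Real.log ‖y‖ < 0 := Real.log_neg hn0 hnlt1
      have hlogy_ge : -(L k) ≤ Real.log ‖y‖ := by
        rw [← hlogr k]
        exact Real.log_le_log (hrpos (k+1)) c3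
      have p2 : ((L k) ^ 2)⁻¹ ≤ min 1 ((Real.log ‖y‖) ^ 2)⁻¹ := by
        refine le_min ?_ ?_
        · have h1 : (1:ℝ) ≤ (L k) ^ 2 := by nlinarith [hL1 k]
          calc ((L k) ^ 2)⁻¹ ≤ (1:ℝ)⁻¹ := inv_anti₀ one_pos h1
            _ = 1 := inv_one
        · apply inv_anti₀
          · exact pow_two_pos_of_ne_zero hlogy_neg.ne
          · exact sq_le_sq' hlogy_ge (le_trans hlogy_neg.le (hLpos k).le)
      have hnn1 : (0:ℝ) ≤ (r k) ^ (-(d:ℝ)) := Real.rpow_nonneg (hrpos k).le _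
      have hnn2 : (0:ℝ) ≤ ‖y‖ ^ (-(d:ℝ)) := Real.rpow_nonneg (norm_nonneg y) _
      exact mul_le_mul p1 p2 (by positivity) hnn2
    have hint : ENNReal.ofReal (c₀ * ((r k) ^ (-(d:ℝ)) * ((L k) ^ 2)⁻¹)) * volume (T k) ≤
        ∫⁻ x in T k, (closedBall (0 : EuclideanSpace ℝ (Fin d)) 1).indicator
          (fun x => ENNReal.ofReal (c₀ * f (infDist x E))) x ∂volume := by
      rw [← setLIntegral_const]
      exact setLIntegral_mono' (hTmeas k) hpoint
    have hrp : (r k) ^ (-(d:ℝ)) = ((r k) ^ d)⁻¹ := by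
      rw [Real.rpow_neg (hrpos k).le, Real.rpow_natCast]
    have hpw : ((r k) ^ d : ℝ) ≠ 0 := (pow_pos (hrpos k) d).ne'
    have hnn1 : (0:ℝ) ≤ (r k) ^ (-(d:ℝ)) := Real.rpow_nonneg (hrpos k).le _
    have hval : c₀ * κ' / (L k) ^ 2 =
        c₀ * ((r k) ^ (-(d:ℝ)) * ((L k) ^ 2)⁻¹) * ((r k) ^ d * κ') := by
      rw [hrp]; field_simp
    have e2 : ENNReal.ofReal (c₀ * ((r k) ^ (-(d:ℝ)) * ((L k) ^ 2)⁻¹) * ((r k) ^ d * κ'))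
        = ENNReal.ofReal (c₀ * ((r k) ^ (-(d:ℝ)) * ((L k) ^ 2)⁻¹)) *
          ENNReal.ofReal ((r k) ^ d * κ') :=
      ENNReal.ofReal_mul (mul_nonneg hc₀.le (mul_nonneg hnn1 (by positivity)))
    have e3 : ENNReal.ofReal (((r k) ^ d : ℝ) * κ')
        = ENNReal.ofReal ((r k) ^ d) * ENNReal.ofReal κ' :=
      ENNReal.ofReal_mul (pow_pos (hrpos k) d).le
    rw [hval, e2, e3, hκoR, ← hTvol k]
    exact hint
  -- telescoping series
  set M : ℝ := c₀ * κ' / Real.log 2 with hM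
  have hMpos : 0 < M := div_pos (mul_pos hc₀ hκ'pos) hlog2
  set t : ℕ → ℝ := fun k => M * ((L k)⁻¹ - (L (k+1))⁻¹) with ht
  have hLmono : ∀ k, L k ≤ L (k + 1) := by
    intro k; rw [hLsucc]; linarith
  have htnn : ∀ k, 0 ≤ t k := by
    intro k; rw [ht]; simp only
    apply mul_nonneg hMpos.le
    have h1 := inv_anti₀ (hLpos k) (hLmono k)
    linarith
  have htle : ∀ k, t k ≤ c₀ * κ' / (L k) ^ 2 := by
    intro k
    rw [ht]; simp only
    have hdiff : (L k)⁻¹ - (L (k+1))⁻¹ = Real.log 2 / (L k * L (k+1)) := by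
      rw [inv_sub_inv (hLpos k).ne' (hLpos (k+1)).ne', hLsucc]; ring_nf
    rw [hdiff]
    have h1 : M * (Real.log 2 / (L k * L (k+1))) = c₀ * κ' / (L k * L (k+1)) := by
      rw [hM]; field_simp
    rw [h1]
    apply div_le_div_of_nonneg_left (mul_pos hc₀ hκ'pos).le (pow_pos (hLpos k) 2)
    nlinarith [hLpos k, hLmono k]
  have hsum : HasSum t (M * (L 0)⁻¹) := by
    rw [hasSum_iff_tendsto_nat_of_nonneg htnn]
    have hps : ∀ n, ∑ i ∈ Finset.range n, t i = M * (L 0)⁻¹ - M * (L n)⁻¹ := by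
      intro n
      have h1 := Finset.sum_range_sub' (fun j => M * (L j)⁻¹) n
      rw [← h1]
      apply Finset.sum_congr rfl
      intro i _
      rw [ht]; simp only; ring
    simp only [hps]
    have hLtop : Filter.Tendsto L Filter.atTop Filter.atTop := by
      rw [hLdef]
      apply Filter.tendsto_atTop_add_const_left
      apply Filter.Tendsto.atTop_mul_const hlog2
      exact Filter.tendsto_atTop_add_const_right _ 1 tendsto_natCast_atTop_atTop
    have h2 : Filter.Tendsto (fun n => M * (L n)⁻¹) Filter.atTop (nhds (M * 0)) :=
      (hLtop.inv_tendsto_atTop).const_mul M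
    have h3 := Filter.Tendsto.sub (tendsto_const_nhds (x := M * (L 0)⁻¹)
      (f := Filter.atTop)) h2
    simpa using h3
  have hsummable : Summable t := hsum.summable
  have htsum : ∑' k, t k = M * (L 0)⁻¹ := hsum.tsum_eq
  have habs : |Real.log s| = b := by
    rw [abs_of_neg (by linarith : Real.log s < 0)]
  calc ENNReal.ofReal (c₀ * κ' / (2 * Real.log 2) / |Real.log s|)
      ≤ ENNReal.ofReal (M * (L 0)⁻¹) := by
        apply ENNReal.ofReal_le_ofReal
        rw [habs]
        have hL0 : L 0 ≤ 2 * b := by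
          rw [hLdef]; simp only
          push_cast
          linarith
        have heq : c₀ * κ' / (2 * Real.log 2) / b = M * (2 * b)⁻¹ := by
          rw [hM]; field_simp
        rw [heq]
        apply mul_le_mul_of_nonneg_left _ hMpos.le
        exact inv_anti₀ (hLpos 0) hL0
    _ = ENNReal.ofReal (∑' k, t k) := by rw [htsum]
    _ = ∑' k, ENNReal.ofReal (t k) := ENNReal.ofReal_tsum_of_nonneg htnn hsummable
    _ ≤ ∑' k, ρ (T k) := ENNReal.tsum_le_tsum fun k =>
        le_trans (ENNReal.ofReal_le_ofReal (htle k)) (hmain k)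
    _ = ρ (⋃ k, T k) := (measure_iUnion hdisj hTmeas).symm
    _ ≤ ρ (ball A' s ∩ {x : EuclideanSpace ℝ (Fin d) | 0 < x i1}) :=
        measure_mono (Set.iUnion_subset hsubT)
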